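/- For full-rank X in R^{k x d} (k > d) and y in R^k, the least squares solution satisfies w*(X,y) = sum_{i=1}^k [det(X_{-i}^T X_{-i}) / ((k-d) det(X^T X))] * w*(X_{-i}, y_{-i}), where X_{-i}, y_{-i} remove the i-th row/entry and w*(X,y) = X^+ y. -/

import Mathlib

/-!
Write `A = XᵀX`, `hᵢ = xᵢᵀ A⁻¹ xᵢ` for the leverage of row `i` and `rᵢ = yᵢ - xᵢᵀ w` for its
residual in the full fit `w`. Deleting row `i` is the rank-one downdate `A - xᵢ xᵢᵀ`, so the matrix
determinant lemma gives `det (X₋ᵢᵀ X₋ᵢ) = (1 - hᵢ) det A`, and Sherman–Morrison gives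
`(1 - hᵢ) w₋ᵢ = (1 - hᵢ) w - rᵢ A⁻¹ xᵢ`. Summing over `i`, the leverages add up to the trace `d`
of the hat matrix `X A⁻¹ Xᵀ` and `∑ rᵢ xᵢ = Xᵀ (y - X w) = 0` by the normal equations, which leaves
`(k - d) w`. If `hᵢ = 1` the downdate is singular, but then `rᵢ = 0`: the hat matrix is symmetric
and idempotent, so a row with diagonal entry `1` is a unit vector.
-/

open Matrix

/-- Least squares solution via the pseudoinverse of a full column rank matrix. -/
noncomputable def lsq {k d : ℕ} (X : Matrix (Fin k) (Fin d) ℝ) (y : Fin k → ℝ) :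
    Fin d → ℝ :=
  ((Xᵀ * X)⁻¹ * Xᵀ) *ᵥ y

namespace Matrix

variable {n K : Type*} [Fintype n] [DecidableEq n] [Field K]

theorem isUnit_det_of_rank_eq_card {A : Matrix n n K} (h : A.rank = Fintype.card n) :
    IsUnit A.det := by
  rw [← isUnit_iff_isUnit_det, ← mulVec_surjective_iff_isUnit, ← coe_mulVecLin,
    ← LinearMap.range_eq_top]
  apply Submodule.eq_top_of_finrank_eq
  rw [← rank, h, Module.finrank_fintype_fun_eq_card]

theorem det_sub_vecMulVec {A : Matrix n n K} (hA : IsUnit A.det) (u v : n → K) :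
    (A - vecMulVec u v).det = A.det * (1 - v ⬝ᵥ (A⁻¹ *ᵥ u)) := by
  rw [sub_eq_add_neg, ← neg_vecMulVec, vecMulVec_eq Unit, det_add_replicateCol_mul_replicateRow hA,
    Matrix.mul_assoc, ← replicateCol_mulVec, det_unique (n := Unit)]
  simp [mulVec_neg, sub_eq_add_neg]

variable [LinearOrder K] [IsStrictOrderedRing K]

theorem row_eq_single_of_apply_self_eq_one {P : Matrix n n K} (hP_symm : P.IsSymm)
    (hP : IsIdempotentElem P) {i : n} (hii : P i i = 1) : P i = Pi.single i 1 := by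
  have hsq : ∑ j, P i j ^ 2 = P i i := by
    conv_rhs => rw [← hP.eq, mul_apply]
    refine Finset.sum_congr rfl fun j _ => ?_
    rw [sq, hP_symm.apply]
  have hoff : ∑ j ∈ Finset.univ.erase i, P i j ^ 2 = 0 := by
    rw [← Finset.add_sum_erase _ _ (Finset.mem_univ i), hii] at hsq
    linarith
  ext j
  rcases eq_or_ne j i with rfl | hj
  · simp [hii]
  · rw [Pi.single_eq_of_ne hj]
    exact pow_eq_zero_iff two_ne_zero |>.mp <|
      (Finset.sum_eq_zero_iff_of_nonneg fun j _ => sq_nonneg (P i j)).mp hoff j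
        (Finset.mem_erase.mpr ⟨hj, Finset.mem_univ j⟩)

end Matrix

section LeastSquares

variable {k d : ℕ} (X : Matrix (Fin k) (Fin d) ℝ) (y : Fin k → ℝ)

noncomputable def hatMatrix : Matrix (Fin k) (Fin k) ℝ := X * ((Xᵀ * X)⁻¹ * Xᵀ)

noncomputable def leverage (i : Fin k) : ℝ := X i ⬝ᵥ ((Xᵀ * X)⁻¹ *ᵥ X i)

noncomputable def lsqResidual (i : Fin k) : ℝ := y i - X i ⬝ᵥ lsq X y

theorem hatMatrix_apply_self (i : Fin k) : hatMatrix X i i = leverage X i := rfl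

theorem hatMatrix_mulVec : hatMatrix X *ᵥ y = X *ᵥ lsq X y := by
  rw [hatMatrix, lsq, mulVec_mulVec]

theorem isSymm_hatMatrix : (hatMatrix X).IsSymm := by
  rw [IsSymm, hatMatrix, transpose_mul, transpose_mul, transpose_transpose, transpose_nonsing_inv,
    transpose_mul, transpose_transpose, Matrix.mul_assoc]

variable {X}

theorem isIdempotentElem_hatMatrix (hX : IsUnit (Xᵀ * X).det) :
    IsIdempotentElem (hatMatrix X) := by
  rw [IsIdempotentElem, hatMatrix, Matrix.mul_assoc, ← Matrix.mul_assoc _ X,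
    Matrix.mul_assoc _ Xᵀ X, nonsing_inv_mul _ hX, Matrix.one_mul]

theorem trace_hatMatrix (hX : IsUnit (Xᵀ * X).det) : (hatMatrix X).trace = d := by
  rw [hatMatrix, trace_mul_comm, Matrix.mul_assoc, nonsing_inv_mul _ hX, trace_one,
    Fintype.card_fin]

theorem gram_mulVec_lsq (hX : IsUnit (Xᵀ * X).det) : (Xᵀ * X) *ᵥ lsq X y = Xᵀ *ᵥ y := by
  rw [lsq, mulVec_mulVec, ← Matrix.mul_assoc, mul_nonsing_inv _ hX, Matrix.one_mul]

theorem lsq_eq_of_gram_mulVec (hX : IsUnit (Xᵀ * X).det) {w : Fin d → ℝ}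
    (hw : (Xᵀ * X) *ᵥ w = Xᵀ *ᵥ y) : lsq X y = w := by
  rw [lsq, ← mulVec_mulVec, ← hw, mulVec_mulVec, nonsing_inv_mul _ hX, one_mulVec]

theorem sum_leverage (hX : IsUnit (Xᵀ * X).det) : ∑ i, leverage X i = d := by
  simp only [← hatMatrix_apply_self, ← trace_hatMatrix hX, trace, diag]

theorem sum_lsqResidual_smul (hX : IsUnit (Xᵀ * X).det) :
    ∑ i, lsqResidual X y i • X i = 0 := by
  have hres : lsqResidual X y = y - X *ᵥ lsq X y := rfl
  rw [← vecMul_eq_sum, hres, ← mulVec_transpose, mulVec_sub, mulVec_mulVec, gram_mulVec_lsq y hX,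
    sub_self]

theorem lsqResidual_eq_zero_of_leverage_eq_one (hX : IsUnit (Xᵀ * X).det) {i : Fin k}
    (hi : leverage X i = 1) : lsqResidual X y i = 0 := by
  have hrow := row_eq_single_of_apply_self_eq_one (isSymm_hatMatrix X)
    (isIdempotentElem_hatMatrix hX) ((hatMatrix_apply_self X i).trans hi)
  have hfit := congrFun (hatMatrix_mulVec X y) i
  rw [mulVec, hrow, single_dotProduct, one_mul] at hfit
  rw [lsqResidual, hfit]
  exact sub_self _

end LeastSquares

section LeaveOneOut

variable {n : ℕ}

theorem gram_submatrix_succAbove {m R : Type*} [CommRing R] (X : Matrix (Fin (n + 1)) m R)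
    (i : Fin (n + 1)) :
    (X.submatrix i.succAbove id)ᵀ * X.submatrix i.succAbove id =
      Xᵀ * X - vecMulVec (X i) (X i) := by
  ext a b
  rw [Matrix.sub_apply, mul_apply, mul_apply, Fin.sum_univ_succAbove _ i, vecMulVec_apply]
  simp

theorem transpose_mulVec_submatrix_succAbove {m R : Type*} [CommRing R]
    (X : Matrix (Fin (n + 1)) m R) (y : Fin (n + 1) → R) (i : Fin (n + 1)) :
    (X.submatrix i.succAbove id)ᵀ *ᵥ (y ∘ i.succAbove) = Xᵀ *ᵥ y - y i • X i := by
  ext a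
  simp only [mulVec, dotProduct, transpose_apply, submatrix_apply, id, Function.comp_apply,
    Pi.sub_apply, Pi.smul_apply, smul_eq_mul, Fin.sum_univ_succAbove (fun j => X j a * y j) i]
  ring

variable {d : ℕ} {X : Matrix (Fin (n + 1)) (Fin d) ℝ} (y : Fin (n + 1) → ℝ)

theorem det_gram_submatrix_succAbove (hX : IsUnit (Xᵀ * X).det) (i : Fin (n + 1)) :
    ((X.submatrix i.succAbove id)ᵀ * X.submatrix i.succAbove id).det =
      (Xᵀ * X).det * (1 - leverage X i) := by
  rw [gram_submatrix_succAbove, det_sub_vecMulVec hX, leverage]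

theorem one_sub_leverage_smul_lsq_submatrix (hX : IsUnit (Xᵀ * X).det) (i : Fin (n + 1)) :
    (1 - leverage X i) • lsq (X.submatrix i.succAbove id) (y ∘ i.succAbove) =
      (1 - leverage X i) • lsq X y - lsqResidual X y i • ((Xᵀ * X)⁻¹ *ᵥ X i) := by
  rcases eq_or_ne (1 - leverage X i) 0 with hi | hi
  · rw [hi, lsqResidual_eq_zero_of_leverage_eq_one y hX (by linarith)]
    simp
  set c := lsqResidual X y i / (1 - leverage X i)
  have hXi : IsUnit ((X.submatrix i.succAbove id)ᵀ * X.submatrix i.succAbove id).det := by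
    rw [det_gram_submatrix_succAbove hX]
    exact hX.mul hi.isUnit
  have hw : ((X.submatrix i.succAbove id)ᵀ * X.submatrix i.succAbove id) *ᵥ
      (lsq X y - c • ((Xᵀ * X)⁻¹ *ᵥ X i)) = (X.submatrix i.succAbove id)ᵀ *ᵥ (y ∘ i.succAbove) := by
    rw [gram_submatrix_succAbove, transpose_mulVec_submatrix_succAbove, sub_mulVec, mulVec_sub,
      mulVec_smul, mulVec_mulVec, mul_nonsing_inv _ hX, one_mulVec, gram_mulVec_lsq y hX,
      vecMulVec_mulVec, op_smul_eq_smul, sub_sub, ← add_smul, dotProduct_sub, dotProduct_smul,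
      smul_eq_mul, ← leverage]
    have hc : c * (1 - leverage X i) = y i - X i ⬝ᵥ lsq X y := div_mul_cancel₀ _ hi
    congr 2
    linarith
  rw [lsq_eq_of_gram_mulVec _ hXi hw, smul_sub, smul_smul, mul_div_cancel₀ _ hi]

theorem sum_one_sub_leverage_smul_lsq_submatrix (hX : IsUnit (Xᵀ * X).det) :
    ∑ i, (1 - leverage X i) • lsq (X.submatrix i.succAbove id) (y ∘ i.succAbove) =
      ((n + 1 : ℝ) - d) • lsq X y := by
  simp only [one_sub_leverage_smul_lsq_submatrix y hX, Finset.sum_sub_distrib, ← Finset.sum_smul,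
    ← mulVec_smul, ← mulVec_sum, sum_lsqResidual_smul y hX, mulVec_zero, sub_zero,
    sum_leverage hX, Finset.sum_const, Finset.card_univ, Fintype.card_fin, nsmul_eq_mul, mul_one,
    Nat.cast_add_one]

end LeaveOneOut

theorem stmt4_general (d n : ℕ) (hdn : d < n + 1)
    (X : Matrix (Fin (n + 1)) (Fin d) ℝ) (hrank : X.rank = d)
    (y : Fin (n + 1) → ℝ) :
    lsq X y =
      ∑ i : Fin (n + 1),
        (((X.submatrix i.succAbove id)ᵀ * X.submatrix i.succAbove id).det /
            (((n + 1 : ℝ) - d) * (Xᵀ * X).det)) •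
          lsq (X.submatrix i.succAbove id) (y ∘ i.succAbove) := by
  have hX : IsUnit (Xᵀ * X).det := isUnit_det_of_rank_eq_card <| by
    rw [rank_transpose_mul_self, hrank, Fintype.card_fin]
  have hN : (n + 1 : ℝ) - d ≠ 0 := sub_ne_zero.mpr (by exact_mod_cast hdn.ne')
  simp only [det_gram_submatrix_succAbove hX, mul_comm ((n + 1 : ℝ) - d),
    mul_div_mul_left _ _ hX.ne_zero, div_eq_inv_mul, ← smul_smul, ← Finset.smul_sum,
    sum_one_sub_leverage_smul_lsq_submatrix y hX, inv_smul_smul₀ hN]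

/-- Leave-one-out decomposition of the least squares solution. -/
theorem stmt4 (d n : ℕ) (hd : 0 < d) (hdn : d < n + 1)
    (X : Matrix (Fin (n + 1)) (Fin d) ℝ) (hrank : X.rank = d)
    (y : Fin (n + 1) → ℝ) :
    lsq X y =
      ∑ i : Fin (n + 1),
        (((X.submatrix i.succAbove id)ᵀ * X.submatrix i.succAbove id).det /
            (((n + 1 : ℝ) - d) * (Xᵀ * X).det)) •
          lsq (X.submatrix i.succAbove id) (y ∘ i.succAbove) :=
  stmt4_general d n hdn X hrank y
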